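/- Let f : ℝⁿ → ℝ be Lipschitz with constant L and supported in a set of finite Lebesgue measure M. Then for every λ > 0 and p ∈ [1,∞), λ^p · m⊗m({(x,y) : |f(x)-f(y)| > λ|x-y| m(B(x,|x-y|))^{1/p}}) ≤ 2 M L^p, where m is Lebesgue measure on ℝⁿ. -/

import Mathlib

/-!
If `|f x - f y| > λ |x - y| m(B(x, |x - y|))^{1/p}`, the Lipschitz bound `|f x - f y| ≤ L |x - y|`
forces `m(B(x, |x - y|)) < (L/λ)^p`, i.e. `|x - y| < R` for the radius `R` of the balls of measure
`(L/λ)^p`; moreover `x` or `y` lies in the support of `f`. Each slice of the symmetric band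
`{|x - y| < R}` is a ball of measure `(L/λ)^p`, so the part of the band over `S`, counted once in
each coordinate, has measure at most `2 (L/λ)^p m(S)`.
-/

open Metric MeasureTheory

namespace MeasureTheory.Measure

variable {α β : Type*} [MeasurableSpace α] [MeasurableSpace β]

theorem prod_inter_fst_preimage_le (μ : Measure α) (ν : Measure β) {D : Set (α × β)}
    (hD : MeasurableSet D) {c : ENNReal} (hc : ∀ x, ν (Prod.mk x ⁻¹' D) ≤ c) (S : Set α) :
    μ.prod ν (D ∩ Prod.fst ⁻¹' S) ≤ c * μ S := by
  set S' := toMeasurable μ S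
  have hS' : MeasurableSet S' := measurableSet_toMeasurable μ S
  have hslice : ∀ x, ν (Prod.mk x ⁻¹' (D ∩ Prod.fst ⁻¹' S')) ≤ S'.indicator (fun _ => c) x := by
    intro x
    by_cases hx : x ∈ S'
    · have : Prod.mk x ⁻¹' (D ∩ Prod.fst ⁻¹' S') = Prod.mk x ⁻¹' D := by ext; simp [hx]
      rw [this, Set.indicator_of_mem hx]
      exact hc x
    · have : Prod.mk x ⁻¹' (D ∩ Prod.fst ⁻¹' S') = ∅ := by ext; simp [hx]
      simp [this]
  calc μ.prod ν (D ∩ Prod.fst ⁻¹' S)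
      ≤ μ.prod ν (D ∩ Prod.fst ⁻¹' S') := by gcongr; exact subset_toMeasurable μ S
    _ ≤ ∫⁻ x, ν (Prod.mk x ⁻¹' (D ∩ Prod.fst ⁻¹' S')) ∂μ :=
        prod_apply_le (hD.inter (measurable_fst hS'))
    _ ≤ ∫⁻ x, S'.indicator (fun _ => c) x ∂μ := lintegral_mono hslice
    _ = c * μ S := by rw [lintegral_indicator_const hS', measure_toMeasurable]

theorem prod_inter_fst_union_snd_preimage_le (μ : Measure α) [SFinite μ] {D : Set (α × α)}
    (hD : MeasurableSet D) (hD_symm : Prod.swap ⁻¹' D = D) {c : ENNReal}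
    (hc : ∀ x, μ (Prod.mk x ⁻¹' D) ≤ c) (S : Set α) :
    μ.prod μ (D ∩ (Prod.fst ⁻¹' S ∪ Prod.snd ⁻¹' S)) ≤ 2 * c * μ S := by
  have hswap : μ.prod μ (D ∩ Prod.snd ⁻¹' S) = μ.prod μ (D ∩ Prod.fst ⁻¹' S) := by
    rw [← measurePreserving_swap.measure_preimage_emb
      MeasurableEquiv.prodComm.measurableEmbedding, Set.preimage_inter, hD_symm]
    rfl
  calc μ.prod μ (D ∩ (Prod.fst ⁻¹' S ∪ Prod.snd ⁻¹' S))
      ≤ μ.prod μ (D ∩ Prod.fst ⁻¹' S) + μ.prod μ (D ∩ Prod.snd ⁻¹' S) := by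
        rw [Set.inter_union_distrib_left]; exact measure_union_le _ _
    _ ≤ c * μ S + c * μ S := by
        rw [hswap]; gcongr <;> exact prod_inter_fst_preimage_le μ μ hD hc S
    _ = 2 * c * μ S := by ring

end MeasureTheory.Measure

theorem exists_addHaar_ball_eq {E : Type*} [NormedAddCommGroup E] [NormedSpace ℝ E]
    [FiniteDimensional ℝ E] [Nontrivial E] [MeasurableSpace E] [BorelSpace E]
    (μ : Measure E) [μ.IsAddHaarMeasure] {c : ℝ} (hc : 0 ≤ c) :
    ∃ R, ∀ x, μ (ball x R) = ENNReal.ofReal c := by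
  set V := μ (ball 0 1)
  have hV0 : V ≠ 0 := (measure_ball_pos μ 0 one_pos).ne'
  have hVtop : V ≠ ⊤ := measure_ball_lt_top.ne
  have hd : Module.finrank ℝ E ≠ 0 := Module.finrank_pos.ne'
  have hcV : 0 ≤ c / V.toReal := div_nonneg hc ENNReal.toReal_nonneg
  refine ⟨(c / V.toReal) ^ ((Module.finrank ℝ E : ℝ)⁻¹), fun x => ?_⟩
  rw [Measure.addHaar_ball μ x (Real.rpow_nonneg hcV _), Real.rpow_inv_natCast_pow hcV hd,
    ENNReal.ofReal_div_of_pos (ENNReal.toReal_pos hV0 hVtop), ENNReal.ofReal_toReal hVtop,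
    ENNReal.div_mul_cancel hV0 hVtop]

theorem lt_div_rpow_of_mul_rpow_lt {lam L d t p : ℝ} (hlam : 0 < lam) (hp : 0 < p)
    (hd : 0 ≤ d) (ht : 0 ≤ t) (h : lam * d * t ^ (1 / p) < L * d) : t < (L / lam) ^ p := by
  have hd_pos : 0 < d := hd.lt_of_ne (by rintro rfl; simp at h)
  have hroot : t ^ (1 / p) < L / lam := by
    rw [lt_div_iff₀ hlam]; nlinarith
  calc t = (t ^ (1 / p)) ^ p := by rw [← Real.rpow_mul ht, one_div_mul_cancel hp.ne', Real.rpow_one]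
    _ < (L / lam) ^ p := Real.rpow_lt_rpow (Real.rpow_nonneg ht _) hroot hp

section LevelSet

variable {X : Type*} [PseudoMetricSpace X] [MeasurableSpace X]

/-- Level set, at height `lam`, of the Brezis–Van Schaftingen–Yung difference quotient
`|f x - f y| / (|x - y| μ(B(x, |x - y|))^{1/p})`. -/
def bvyLevelSet (μ : Measure X) (f : X → ℝ) (lam p : ℝ) : Set (X × X) :=
  {q | |f q.1 - f q.2| > lam * dist q.1 q.2 * (μ (ball q.1 (dist q.1 q.2))).toReal ^ (1 / p)}

variable {μ : Measure X} {f : X → ℝ} {lam p : ℝ}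

theorem bvyLevelSet_subset_support (hlam : 0 ≤ lam) :
    bvyLevelSet μ f lam p ⊆
      Prod.fst ⁻¹' Function.support f ∪ Prod.snd ⁻¹' Function.support f := by
  intro q hq
  by_contra hout
  simp only [Set.mem_union, Set.mem_preimage, Function.mem_support, not_or, not_not] at hout
  have hq : _ < |f q.1 - f q.2| := hq
  rw [hout.1, hout.2, sub_self, abs_zero] at hq
  exact hq.not_ge (by positivity)

theorem toReal_measure_ball_lt_of_mem_bvyLevelSet {L : ℝ}
    (hf : ∀ a b, |f a - f b| ≤ L * dist a b) (hlam : 0 < lam) (hp : 0 < p) {q : X × X}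
    (hq : q ∈ bvyLevelSet μ f lam p) :
    (μ (ball q.1 (dist q.1 q.2))).toReal < (L / lam) ^ p :=
  lt_div_rpow_of_mul_rpow_lt hlam hp dist_nonneg ENNReal.toReal_nonneg
    (lt_of_lt_of_le hq (hf q.1 q.2))

end LevelSet

theorem measure_bvyLevelSet_le {E : Type*} [NormedAddCommGroup E] [NormedSpace ℝ E]
    [FiniteDimensional ℝ E] [Nontrivial E] [MeasurableSpace E] [BorelSpace E]
    (μ : Measure E) [μ.IsAddHaarMeasure] {f : E → ℝ} {L : ℝ} (hL : 0 ≤ L)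
    (hf : ∀ a b, |f a - f b| ≤ L * dist a b) {S : Set E} (hsupp : Function.support f ⊆ S)
    {p lam : ℝ} (hp : 0 < p) (hlam : 0 < lam) :
    ENNReal.ofReal (lam ^ p) * μ.prod μ (bvyLevelSet μ f lam p) ≤
      2 * ENNReal.ofReal (L ^ p) * μ S := by
  set c := (L / lam) ^ p
  obtain ⟨R, hR⟩ := exists_addHaar_ball_eq μ (Real.rpow_nonneg (div_nonneg hL hlam.le) p)
  set D := {q : E × E | dist q.1 q.2 < R}
  have hD : MeasurableSet D := (isOpen_lt continuous_dist continuous_const).measurableSet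
  have hD_symm : Prod.swap ⁻¹' D = D := by ext; simp [D, dist_comm]
  have hslice : ∀ x, μ (Prod.mk x ⁻¹' D) ≤ ENNReal.ofReal c := fun x => by
    have : Prod.mk x ⁻¹' D = ball x R := by ext; simp [D, dist_comm]
    rw [this, hR]
  have hsub : bvyLevelSet μ f lam p ⊆ D ∩ (Prod.fst ⁻¹' S ∪ Prod.snd ⁻¹' S) := by
    intro q hq
    refine ⟨?_, Set.union_subset_union (Set.preimage_mono hsupp) (Set.preimage_mono hsupp)
      (bvyLevelSet_subset_support hlam.le hq)⟩
    show dist q.1 q.2 < R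
    by_contra! hRq
    have hball : ENNReal.ofReal c ≤ μ (ball q.1 (dist q.1 q.2)) :=
      hR q.1 ▸ measure_mono (ball_subset_ball hRq)
    exact (toReal_measure_ball_lt_of_mem_bvyLevelSet hf hlam hp hq).not_ge
      ((ENNReal.ofReal_le_iff_le_toReal measure_ball_lt_top.ne).1 hball)
  have hc : ENNReal.ofReal (lam ^ p) * ENNReal.ofReal c = ENNReal.ofReal (L ^ p) := by
    rw [← ENNReal.ofReal_mul (by positivity), ← Real.mul_rpow hlam.le (by positivity),
      mul_div_cancel₀ _ hlam.ne']
  calc ENNReal.ofReal (lam ^ p) * μ.prod μ (bvyLevelSet μ f lam p)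
      ≤ ENNReal.ofReal (lam ^ p) * (2 * ENNReal.ofReal c * μ S) := by
        gcongr
        exact (measure_mono hsub).trans (Measure.prod_inter_fst_union_snd_preimage_le μ hD hD_symm hslice S)
    _ = 2 * ENNReal.ofReal (L ^ p) * μ S := by rw [← hc]; ring

/-- BVY weak-type bound for Lipschitz functions with support of finite measure. -/
theorem bvy_weak_bound (n : ℕ) (hn : 1 ≤ n)
    (f : EuclideanSpace ℝ (Fin n) → ℝ) (L : ℝ) (hL : 0 < L)
    (hf : ∀ a b, |f a - f b| ≤ L * dist a b)
    (S : Set (EuclideanSpace ℝ (Fin n))) (M : ℝ)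
    (hsupp : Function.support f ⊆ S) (hS : volume S = ENNReal.ofReal M)
    (p : ℝ) (hp : 1 ≤ p) (lam : ℝ) (hlam : 0 < lam) :
    ENNReal.ofReal (lam ^ p) *
      (volume.prod volume)
        {q : EuclideanSpace ℝ (Fin n) × EuclideanSpace ℝ (Fin n) |
          |f q.1 - f q.2| >
            lam * dist q.1 q.2 * (volume (ball q.1 (dist q.1 q.2))).toReal ^ (1 / p)}
      ≤ ENNReal.ofReal (2 * M * L ^ p) := by
  have : Nonempty (Fin n) := Fin.pos_iff_nonempty.mp hn
  calc _ ≤ 2 * ENNReal.ofReal (L ^ p) * volume S :=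
        measure_bvyLevelSet_le volume hL.le hf hsupp (by linarith) hlam
    _ = ENNReal.ofReal (2 * M * L ^ p) := by
        rw [hS, mul_right_comm (2 : ℝ), ENNReal.ofReal_mul (by positivity),
          ENNReal.ofReal_mul zero_le_two, ENNReal.ofReal_ofNat]
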